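/- arXiv:1106.6072 — 3 statements merged into one kernel-verified Lean document; each statement's English description precedes it below -/
import Mathlib

section
/- Let H ≥ 1 be an integer and let X_1, …, X_H be independent random variables, each uniformly distributed on the unit circle {z ∈ ℂ : |z| = 1}, and set Z_H = X_1 + ⋯ + X_H. If r and s are non-negative integers with r + s = 2m even, then E[(Re Z_H)^r (Im Z_H)^s] = B_m(H) · Σ_{0 ≤ j ≤ r, 0 ≤ k ≤ s, j+k = m} 2^{−r} (2i)^{−s} C(r,j) C(s,k) (−1)^{s−k}, where C(·,·) denotes binomial coefficients (the right-hand side is a real number). -/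
open MeasureTheory ProbabilityTheory Complex Finset

/-- The uniform probability measure on the unit circle `{z ∈ ℂ : |z| = 1}`. -/
noncomputable def uniformCircle : Measure ℂ :=
  Measure.map (fun t : ℝ => Complex.exp (2 * Real.pi * t * Complex.I))
    (volume.restrict (Set.Icc 0 1))

/-- `B_m(H)`: the number of tuples `(y_1,…,y_m,z_1,…,z_m)` of integers in `{1,…,H}` such that
the multisets `{y_1,…,y_m}` and `{z_1,…,z_m}` coincide. -/
noncomputable def Bcount (m H : ℕ) : ℕ :=
  Nat.card {p : (Fin m → ℕ) × (Fin m → ℕ) //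
    (∀ j, p.1 j ∈ Finset.Icc 1 H) ∧ (∀ j, p.2 j ∈ Finset.Icc 1 H) ∧
    Multiset.map p.1 Finset.univ.val = Multiset.map p.2 Finset.univ.val}

/-!
Writing `Re Z = (Z + conj Z) / 2` and `Im Z = (Z - conj Z) / (2i)` and expanding binomially reduces
the moment to the mixed moments `E[Z^a conj Z^b]`. Expanding these over pairs of index tuples, each
term factors by independence, and orthogonality of `z^c conj z^d` on the circle makes it `1` exactly
when the two tuples have the same multiset of entries, and `0` otherwise. Such pairs only exist when
`a = b`; for the term `Z^(j+k) conj Z^(r-j+s-k)` with `r + s = 2m` this means `j + k = m`, and then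
they are counted by `B_m(H)`.
-/

open scoped ComplexConjugate

lemma measurable_circleParam :
    Measurable (fun t : ℝ => Complex.exp (2 * Real.pi * t * Complex.I)) := by
  fun_prop

instance : IsProbabilityMeasure uniformCircle := by
  have : IsProbabilityMeasure (volume.restrict (Set.Icc (0 : ℝ) 1)) := ⟨by simp⟩
  exact Measure.isProbabilityMeasure_map measurable_circleParam.aemeasurable

lemma uniformCircle_ae_norm_eq_one : ∀ᵐ z ∂uniformCircle, ‖z‖ = 1 := by
  rw [uniformCircle, ae_map_iff measurable_circleParam.aemeasurable
    (measurableSet_eq_fun measurable_norm measurable_const)]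
  exact Filter.Eventually.of_forall fun t => by simp [Complex.norm_exp]

lemma integral_exp_two_pi_int_mul_I (n : ℤ) :
    ∫ t in (0 : ℝ)..1, Complex.exp (n * (2 * Real.pi * Complex.I) * t) =
      if n = 0 then 1 else 0 := by
  split_ifs with hn
  · simp [hn]
  · have hc : (n : ℂ) * (2 * Real.pi * Complex.I) ≠ 0 := by
      simp [hn, Real.pi_ne_zero, Complex.I_ne_zero]
    rw [integral_exp_mul_complex hc]
    simp [Complex.exp_int_mul_two_pi_mul_I]

lemma integral_uniformCircle_pow_mul_conj_pow (c d : ℕ) :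
    ∫ z, z ^ c * conj z ^ d ∂uniformCircle = if c = d then 1 else 0 := by
  have hexp (t : ℝ) : Complex.exp (2 * Real.pi * t * Complex.I) ^ c *
      conj (Complex.exp (2 * Real.pi * t * Complex.I)) ^ d =
        Complex.exp (((c : ℤ) - d : ℤ) * (2 * Real.pi * Complex.I) * t) := by
    rw [← Complex.exp_conj, ← Complex.exp_nat_mul, ← Complex.exp_nat_mul, ← Complex.exp_add]
    simp only [map_mul, Complex.conj_ofReal, Complex.conj_I, map_ofNat]
    push_cast
    ring_nf
  rw [uniformCircle, integral_map measurable_circleParam.aemeasurable (by fun_prop),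
    integral_Icc_eq_integral_Ioc, ← intervalIntegral.integral_of_le zero_le_one]
  simp only [hexp, integral_exp_two_pi_int_mul_I, sub_eq_zero, Nat.cast_inj]

lemma sum_pow_mul_conj_sum_pow {ι : Type*} [Fintype ι] (x : ι → ℂ) (a b : ℕ) :
    (∑ j, x j) ^ a * conj (∑ j, x j) ^ b =
      ∑ p : (Fin a → ι) × (Fin b → ι), (∏ i, x (p.1 i)) * ∏ i, conj (x (p.2 i)) := by
  rw [map_sum, Fintype.sum_pow, Fintype.sum_pow, sum_mul_sum, Fintype.sum_prod_type]

lemma ofReal_re_pow_mul_ofReal_im_pow (z : ℂ) (r s : ℕ) :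
    (z.re : ℂ) ^ r * (z.im : ℂ) ^ s =
      ∑ j ∈ range (r + 1), ∑ k ∈ range (s + 1),
        ((2 : ℂ) ^ r)⁻¹ * ((2 * I) ^ s)⁻¹ * (r.choose j : ℂ) * (s.choose k : ℂ) *
          (-1 : ℂ) ^ (s - k) * (z ^ (j + k) * conj z ^ (r - j + (s - k))) := by
  have hre : (z.re : ℂ) = (z + conj z) / 2 := by
    rw [Complex.add_conj]; push_cast; ring
  have him : (z.im : ℂ) = (z + -conj z) / (2 * I) := by
    rw [← sub_eq_add_neg, Complex.sub_conj]; field_simp; push_cast; ring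
  rw [hre, him, div_pow, div_pow, add_pow, add_pow, sum_div, sum_div, sum_mul_sum]
  refine sum_congr rfl fun j _ => sum_congr rfl fun k _ => ?_
  rw [neg_pow]
  ring

section Combinatorics

variable {ι : Type*} [Fintype ι] [DecidableEq ι]

lemma prod_comp_eq_prod_pow_count {κ M : Type*} [Fintype κ] [CommMonoid M]
    (x : ι → M) (f : κ → ι) :
    ∏ i, x (f i) = ∏ j, x j ^ (univ.val.map f).count j := by
  rw [Finset.prod_eq_multiset_prod, ← Function.comp_def x f, ← Multiset.map_map,
    Finset.prod_multiset_map_count]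
  refine prod_subset (subset_univ _) fun j _ hj => ?_
  rw [Multiset.count_eq_zero.mpr (by simpa using hj), pow_zero]

variable (ι) in
def sameMultisetPairs (a b : ℕ) : Finset ((Fin a → ι) × (Fin b → ι)) :=
  {p | univ.val.map p.1 = univ.val.map p.2}

lemma sameMultisetPairs_eq_empty {a b : ℕ} (hab : a ≠ b) : sameMultisetPairs ι a b = ∅ := by
  refine filter_false_of_mem fun p _ hp => hab ?_
  simpa using congrArg Multiset.card hp

end Combinatorics

lemma card_sameMultisetPairs_fin (m H : ℕ) : #(sameMultisetPairs (Fin H) m m) = Bcount m H := by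
  have map_succ (f : Fin m → Fin H) :
      univ.val.map (fun i => (f i : ℕ) + 1) = (univ.val.map f).map (fun j : Fin H => (j : ℕ) + 1) := by
    rw [Multiset.map_map]; rfl
  have succ_inj : Function.Injective (fun j : Fin H => (j : ℕ) + 1) :=
    fun _ _ h => Fin.ext (by simpa using h)
  rw [Bcount, ← Nat.card_eq_finsetCard]
  refine Nat.card_congr (Equiv.ofBijective
    (fun p => ⟨(fun i => p.1.1 i + 1, fun i => p.1.2 i + 1), by simp, by simp, ?_⟩) ⟨?_, ?_⟩)
  · rw [map_succ, map_succ, (mem_filter.mp p.2).2]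
  · rintro ⟨⟨f, g⟩, _⟩ ⟨⟨f', g'⟩, _⟩ h
    simpa [funext_iff, Fin.ext_iff] using h
  · rintro ⟨⟨f, g⟩, hf, hg, hfg⟩
    simp only [mem_Icc] at hf hg
    refine ⟨⟨(fun i => ⟨f i - 1, by grind⟩, fun i => ⟨g i - 1, by grind⟩), ?_⟩, ?_⟩
    · refine mem_filter.mpr ⟨mem_univ _, Multiset.map_injective succ_inj ?_⟩
      rw [← map_succ, ← map_succ]
      convert hfg using 2 <;> grind
    · ext i <;> simp <;> grind

section CircleSum

variable {Ω ι : Type*} [MeasurableSpace Ω] {μ : Measure Ω} [Fintype ι] {X : ι → Ω → ℂ}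
  (hmeas : ∀ j, Measurable (X j)) (hunif : ∀ j, μ.map (X j) = uniformCircle)
include hmeas hunif

lemma ae_forall_norm_eq_one : ∀ᵐ ω ∂μ, ∀ j, ‖X j ω‖ = 1 :=
  ae_all_iff.mpr fun j => ae_of_ae_map (hmeas j).aemeasurable
    (hunif j ▸ uniformCircle_ae_norm_eq_one)

lemma integrable_prod_mul_prod_conj [IsFiniteMeasure μ] {a b : ℕ} (f : Fin a → ι)
    (g : Fin b → ι) : Integrable (fun ω => (∏ i, X (f i) ω) * ∏ i, conj (X (g i) ω)) μ := by
  refine .of_bound (by fun_prop) 1 ?_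
  filter_upwards [ae_forall_norm_eq_one hmeas hunif] with ω hω
  simp [hω]

lemma integrable_sum_pow_mul_conj_sum_pow [IsFiniteMeasure μ] (a b : ℕ) :
    Integrable (fun ω => (∑ j, X j ω) ^ a * conj (∑ j, X j ω) ^ b) μ := by
  simp_rw [sum_pow_mul_conj_sum_pow]
  exact integrable_finsetSum _ fun p _ => integrable_prod_mul_prod_conj hmeas hunif p.1 p.2

variable (hindep : iIndepFun X μ)
include hindep

lemma integral_prod_pow_mul_conj_pow (c d : ι → ℕ) :
    ∫ ω, ∏ j, X j ω ^ c j * conj (X j ω) ^ d j ∂μ = if c = d then 1 else 0 := by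
  have hf (j : ι) : Continuous fun z : ℂ => z ^ c j * conj z ^ d j := by fun_prop
  have factor (j : ι) :
      ∫ ω, X j ω ^ c j * conj (X j ω) ^ d j ∂μ = if c j = d j then 1 else 0 := by
    rw [← integral_uniformCircle_pow_mul_conj_pow, ← hunif j,
      integral_map (hmeas j).aemeasurable (hf j).aestronglyMeasurable]
  rw [hindep.integral_fun_prod_comp (f := fun j z => z ^ c j * conj z ^ d j)
    (fun j => (hmeas j).aemeasurable) (fun j => (hf j).aestronglyMeasurable)]
  simp only [factor, Fintype.prod_boole, funext_iff]

lemma integral_prod_mul_prod_conj [DecidableEq ι] {a b : ℕ} (f : Fin a → ι) (g : Fin b → ι) :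
    ∫ ω, (∏ i, X (f i) ω) * ∏ i, conj (X (g i) ω) ∂μ =
      if univ.val.map f = univ.val.map g then 1 else 0 := by
  have hprod (ω : Ω) : (∏ i, X (f i) ω) * ∏ i, conj (X (g i) ω) =
      ∏ j, X j ω ^ (univ.val.map f).count j * conj (X j ω) ^ (univ.val.map g).count j := by
    rw [prod_comp_eq_prod_pow_count (X · ω) f, prod_comp_eq_prod_pow_count (conj <| X · ω) g,
      ← prod_mul_distrib]
  simp only [hprod, integral_prod_pow_mul_conj_pow hmeas hunif hindep, funext_iff,
    ← Multiset.ext]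

lemma integral_sum_pow_mul_conj_sum_pow [IsFiniteMeasure μ] [DecidableEq ι] (a b : ℕ) :
    ∫ ω, (∑ j, X j ω) ^ a * conj (∑ j, X j ω) ^ b ∂μ = #(sameMultisetPairs ι a b) := by
  simp_rw [sum_pow_mul_conj_sum_pow]
  rw [integral_finsetSum _ fun p _ => integrable_prod_mul_prod_conj hmeas hunif p.1 p.2]
  simp only [integral_prod_mul_prod_conj hmeas hunif hindep, sum_boole, sameMultisetPairs]

lemma integral_re_pow_mul_im_pow [IsFiniteMeasure μ] [DecidableEq ι] (r s : ℕ) :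
    ((∫ ω, (∑ j, X j ω).re ^ r * (∑ j, X j ω).im ^ s ∂μ : ℝ) : ℂ) =
      ∑ j ∈ range (r + 1), ∑ k ∈ range (s + 1),
        ((2 : ℂ) ^ r)⁻¹ * ((2 * I) ^ s)⁻¹ * (r.choose j : ℂ) * (s.choose k : ℂ) *
          (-1 : ℂ) ^ (s - k) * #(sameMultisetPairs ι (j + k) (r - j + (s - k))) := by
  have hint (a b : ℕ) := integrable_sum_pow_mul_conj_sum_pow hmeas hunif a b
  rw [← integral_complex_ofReal]
  simp_rw [Complex.ofReal_mul, Complex.ofReal_pow, ofReal_re_pow_mul_ofReal_im_pow]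
  rw [integral_finsetSum _ fun j _ => integrable_finsetSum _ fun k _ => (hint _ _).const_mul _]
  refine sum_congr rfl fun j _ => ?_
  rw [integral_finsetSum _ fun k _ => (hint _ _).const_mul _]
  refine sum_congr rfl fun k _ => ?_
  rw [integral_const_mul, integral_sum_pow_mul_conj_sum_pow hmeas hunif hindep]

end CircleSum

theorem even_moments_formula_general
    {Ω : Type*} [MeasurableSpace Ω] (μ : Measure Ω) [IsProbabilityMeasure μ]
    (H : ℕ)
    (X : Fin H → Ω → ℂ)
    (hmeas : ∀ j, Measurable (X j))
    (hindep : iIndepFun X μ)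
    (hunif : ∀ j, Measure.map (X j) μ = uniformCircle)
    (r s m : ℕ) (heven : r + s = 2 * m) :
    ((∫ ω, ((∑ j, X j ω).re ^ r * (∑ j, X j ω).im ^ s) ∂μ : ℝ) : ℂ) =
      (Bcount m H : ℂ) *
        ∑ j ∈ Finset.range (r + 1), ∑ k ∈ Finset.range (s + 1),
          if j + k = m then
            ((2 : ℂ) ^ r)⁻¹ * ((2 * Complex.I) ^ s)⁻¹ *
              (r.choose j : ℂ) * (s.choose k : ℂ) * (-1 : ℂ) ^ (s - k)
          else 0 := by
  rw [integral_re_pow_mul_im_pow hmeas hunif hindep, mul_sum]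
  refine sum_congr rfl fun j hj => ?_
  rw [mul_sum]
  refine sum_congr rfl fun k hk => ?_
  rw [mem_range] at hj hk
  split_ifs with hjk
  · rw [hjk, show r - j + (s - k) = m by omega, card_sameMultisetPairs_fin]
    ring
  · rw [sameMultisetPairs_eq_empty (by omega)]
    simp

/-- Lemma 2.1, even case: if `r + s = 2m` then
`E[(Re Z_H)^r (Im Z_H)^s] = B_m(H) ∑_{j+k=m} 2^{-r} (2i)^{-s} C(r,j) C(s,k) (-1)^{s-k}`. -/
theorem even_moments_formula
    {Ω : Type*} [MeasurableSpace Ω] (μ : Measure Ω) [IsProbabilityMeasure μ]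
    (H : ℕ) (hH : 1 ≤ H)
    (X : Fin H → Ω → ℂ)
    (hmeas : ∀ j, Measurable (X j))
    (hindep : iIndepFun X μ)
    (hunif : ∀ j, Measure.map (X j) μ = uniformCircle)
    (r s m : ℕ) (heven : r + s = 2 * m) :
    ((∫ ω, ((∑ j, X j ω).re ^ r * (∑ j, X j ω).im ^ s) ∂μ : ℝ) : ℂ) =
      (Bcount m H : ℂ) *
        ∑ j ∈ Finset.range (r + 1), ∑ k ∈ Finset.range (s + 1),
          if j + k = m then
            ((2 : ℂ) ^ r)⁻¹ * ((2 * Complex.I) ^ s)⁻¹ *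
              (r.choose j : ℂ) * (s.choose k : ℂ) * (-1 : ℂ) ^ (s - k)
          else 0 :=
  even_moments_formula_general μ H X hmeas hindep hunif r s m heven
end

section
/- There is an absolute constant C > 0 with the following property. Let q be a prime, χ a non-real Dirichlet character modulo q, and H ≥ 1 an integer with H² ≤ q^{1/2}. Then |(1/q) Σ_{x=0}^{q−1} (Re S_{χ,H}(x))² − H/2| ≤ C · H² · q^{−1/2}, and the same bound holds with Re replaced by Im. -/
open Finset Complex

/-- The short character sum `S_{χ,H}(x) = ∑_{x < n ≤ x+H} χ(n)`. -/
noncomputable def shortCharSum {q : ℕ} (χ : DirichletCharacter ℂ q) (H x : ℕ) : ℂ :=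
  ∑ n ∈ Finset.Ioc x (x + H), χ (n : ZMod q)

/-!
Since `Re² z = (|z|² + Re z²) / 2`, it suffices to evaluate `∑ₓ |S(x)|²` and to bound `∑ₓ S(x)²`.
Expanding the squares turns both into sums over pairs of shifts `a, b` of the correlations
`∑_y χ(y + a) χ̄(y + b)` and `∑_y χ(y + a) χ(y + b)`. The first equals `q δ_{ab} - 1`
(orthogonality), so `∑ₓ |S(x)|² = H (q - H)` exactly, the `H ≤ √q` shifts being distinct mod `q`.
A non-real `χ` has `χ² ≠ 1`, so the second vanishes for `a = b`, and for `a ≠ b` the substitution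
`y = (b - a) t - b` makes it `χ(a - b) χ(b - a) J(χ, χ)`, where the Jacobi sum has absolute value
`√q`.
-/

open ComplexConjugate

lemma Fintype.sum_comp_add_right {G M : Type*} [AddGroup G] [Fintype G] [AddCommMonoid M]
    (f : G → M) (a : G) : ∑ y, f (y + a) = ∑ y, f y :=
  Fintype.sum_equiv (Equiv.addRight a) _ _ fun _ => rfl

namespace MulChar

variable {F : Type*} [Field F] [Fintype F]

lemma sq_ne_one_of_apply_im_ne_zero {R : Type*} [CommRing R] {χ : MulChar R ℂ}
    (h : ∃ a, (χ a).im ≠ 0) : χ ^ 2 ≠ 1 := by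
  obtain ⟨a, ha⟩ := h
  intro hχ
  rcases isQuadratic_iff_sq_eq_one.mpr hχ a with h | h | h <;> simp [h] at ha

lemma norm_apply_le_one {R : Type*} [CommRing R] [Finite Rˣ] (χ : MulChar R ℂ) (a : R) :
    ‖χ a‖ ≤ 1 := by
  cases nonempty_fintype Rˣ
  by_cases ha : IsUnit a
  · obtain ⟨u, rfl⟩ := ha
    exact (norm_eq_one_of_mem_rootsOfUnity (χ.apply_mem_rootsOfUnity u)).le
  · simp [map_nonunit χ ha]

lemma sum_apply_add_mul_apply_add {R : Type*} [CommRing R] (χ ψ : MulChar F R) {a b : F}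
    (hab : a ≠ b) :
    ∑ y, χ (y + a) * ψ (y + b) = χ (a - b) * ψ (b - a) * jacobiSum ψ χ := by
  rw [jacobiSum, Finset.mul_sum,
    ← ((Equiv.mulLeft₀ (b - a) (sub_ne_zero.mpr hab.symm)).trans (Equiv.subRight b)).sum_comp]
  refine Fintype.sum_congr _ _ fun x => ?_
  have h₁ : (b - a) * x - b + a = (a - b) * (1 - x) := by ring
  have h₂ : (b - a) * x - b + b = (b - a) * x := by ring
  simp only [Equiv.trans_apply, Equiv.mulLeft₀_apply, Equiv.subRight_apply]
  rw [h₁, h₂, map_mul, map_mul]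
  ring

lemma norm_jacobiSum_self {χ : MulChar F ℂ} (hχ : χ ^ 2 ≠ 1) :
    ‖jacobiSum χ χ‖ = √(Fintype.card F) := by
  have hχ₁ : χ ≠ 1 := by rintro rfl; exact hχ (one_pow 2)
  have hchar : ringChar ℂ ≠ ringChar F := by
    rw [ringChar.eq_zero]
    exact (CharP.char_ne_zero_of_finite F (ringChar F)).symm
  have hconj : jacobiSum χ⁻¹ χ⁻¹ = conj (jacobiSum χ χ) := by
    rw [← star_eq_inv]
    exact jacobiSum_ringHomComp χ χ (starRingEnd ℂ)
  have h := jacobiSum_mul_jacobiSum_inv hchar hχ₁ hχ₁ (by rwa [← sq])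
  rw [hconj, mul_conj, ← ofReal_natCast, ofReal_inj] at h
  rw [Complex.norm_def, h]

lemma sum_apply_add_mul_conj_apply_add [DecidableEq F] {χ : MulChar F ℂ} (hχ : χ ≠ 1)
    (a b : F) :
    ∑ y, χ (y + a) * conj (χ (y + b)) = (if a = b then (Fintype.card F : ℂ) else 0) - 1 := by
  simp only [starRingEnd_apply, star_apply']
  split_ifs with hab
  · subst hab
    simp only [← mul_apply, mul_inv_cancel, Fintype.sum_comp_add_right ⇑(1 : MulChar F ℂ),
      sum_one_eq_card_units, Fintype.card_units]
    rw [Nat.cast_sub Fintype.card_pos, Nat.cast_one]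
  · have hJ : jacobiSum χ⁻¹ χ = -χ⁻¹ (-1) := by
      simpa using jacobiSum_nontrivial_inv (inv_ne_one.mpr hχ)
    have hunit : IsUnit (a - b) := (sub_ne_zero.mpr hab).isUnit
    rw [sum_apply_add_mul_apply_add χ χ⁻¹ hab, hJ]
    calc χ (a - b) * χ⁻¹ (b - a) * -χ⁻¹ (-1) = -(χ * χ⁻¹) (a - b) := by
          rw [mul_apply, mul_neg, mul_assoc, ← map_mul, show (b - a) * -1 = a - b by ring]
      _ = 0 - 1 := by rw [mul_inv_cancel, one_apply hunit, zero_sub]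

lemma norm_sum_apply_add_mul_apply_add_le {χ : MulChar F ℂ} (hχ : χ ^ 2 ≠ 1) (a b : F) :
    ‖∑ y, χ (y + a) * χ (y + b)‖ ≤ √(Fintype.card F) := by
  rcases eq_or_ne a b with rfl | hab
  · simp only [← mul_apply]
    rw [← sq, Fintype.sum_comp_add_right, sum_eq_zero_of_ne_one hχ, norm_zero]
    positivity
  · rw [sum_apply_add_mul_apply_add χ χ hab, norm_mul, norm_mul, norm_jacobiSum_self hχ]
    calc ‖χ (a - b)‖ * ‖χ (b - a)‖ * √(Fintype.card F) ≤ 1 * 1 * √(Fintype.card F) := by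
          gcongr <;> exact norm_apply_le_one χ _
      _ = √(Fintype.card F) := by ring

lemma sum_normSq_sum_apply_add [DecidableEq F] {χ : MulChar F ℂ} (hχ : χ ≠ 1) (S : Finset F) :
    ∑ y, normSq (∑ s ∈ S, χ (y + s)) = #S * (Fintype.card F - #S) := by
  apply ofReal_injective
  push_cast
  simp_rw [← mul_conj, map_sum, sum_mul_sum]
  rw [sum_comm]
  simp_rw [sum_comm (s := univ), sum_apply_add_mul_conj_apply_add hχ, sum_sub_distrib, sum_ite_eq,
    sum_const, nsmul_eq_mul]
  rw [sum_ite_of_true fun _ h => h, sum_const, nsmul_eq_mul]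
  ring

lemma norm_sum_sq_sum_apply_add_le {χ : MulChar F ℂ} (hχ : χ ^ 2 ≠ 1) (S : Finset F) :
    ‖∑ y, (∑ s ∈ S, χ (y + s)) ^ 2‖ ≤ #S ^ 2 * √(Fintype.card F) := by
  simp_rw [sq, sum_mul_sum]
  rw [sum_comm]
  simp_rw [sum_comm (s := univ)]
  calc ‖∑ s ∈ S, ∑ t ∈ S, ∑ y, χ (y + s) * χ (y + t)‖
      ≤ ∑ s ∈ S, ∑ t ∈ S, ‖∑ y, χ (y + s) * χ (y + t)‖ :=
        (norm_sum_le _ _).trans (sum_le_sum fun _ _ => norm_sum_le _ _)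
    _ ≤ ∑ s ∈ S, ∑ t ∈ S, √(Fintype.card F) := by
        gcongr with s _ t _
        exact norm_sum_apply_add_mul_apply_add_le hχ s t
    _ = #S * #S * √(Fintype.card F) := by simp [mul_assoc]

end MulChar

lemma Complex.re_sq_eq (z : ℂ) : z.re ^ 2 = (normSq z + (z ^ 2).re) / 2 := by
  rw [normSq_apply, sq z, mul_re]
  ring

lemma Complex.im_sq_eq (z : ℂ) : z.im ^ 2 = (normSq z - (z ^ 2).re) / 2 := by
  rw [normSq_apply, sq z, mul_re]
  ring

section RealAndImaginaryParts

variable {ι : Type*} (s : Finset ι) (z : ι → ℂ)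

lemma abs_sum_re_sq_sub_le :
    |∑ i ∈ s, (z i).re ^ 2 - (∑ i ∈ s, normSq (z i)) / 2| ≤ ‖∑ i ∈ s, z i ^ 2‖ / 2 := by
  simp_rw [Complex.re_sq_eq, ← sum_div, sum_add_distrib, ← re_sum]
  rw [← sub_div, add_sub_cancel_left, abs_div, abs_two]
  gcongr
  exact abs_re_le_norm _

lemma abs_sum_im_sq_sub_le :
    |∑ i ∈ s, (z i).im ^ 2 - (∑ i ∈ s, normSq (z i)) / 2| ≤ ‖∑ i ∈ s, z i ^ 2‖ / 2 := by
  simp_rw [Complex.im_sq_eq, ← sum_div, sum_sub_distrib, ← re_sum]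
  rw [← sub_div, sub_sub_cancel_left, abs_div, abs_neg, abs_two]
  gcongr
  exact abs_re_le_norm _

end RealAndImaginaryParts

lemma abs_div_sub_half_le_of_abs_sub_le {q H R : ℝ} (hq : 1 ≤ q)
    (hR : |R - H * (q - H) / 2| ≤ H ^ 2 * √q / 2) :
    |R / q - H / 2| ≤ H ^ 2 * q ^ (-(1 : ℝ) / 2) := by
  have hq₀ : 0 < q := by linarith
  have hsq : 1 ≤ √q := Real.one_le_sqrt.mpr hq
  have hpow : q ^ (-(1 : ℝ) / 2) = √q / q := by
    rw [neg_div, Real.rpow_neg hq₀.le, ← Real.sqrt_eq_rpow, Real.sqrt_div_self]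
  have hsplit : R / q - H / 2 = (R - H * (q - H) / 2 - H ^ 2 / 2) / q := by
    field_simp
    ring
  rw [hpow, hsplit, abs_div, abs_of_pos hq₀, ← mul_div_assoc, div_le_div_iff_of_pos_right hq₀]
  calc |R - H * (q - H) / 2 - H ^ 2 / 2| ≤ |R - H * (q - H) / 2| + |H ^ 2 / 2| := abs_sub _ _
    _ ≤ H ^ 2 * √q := by
        rw [abs_of_nonneg (by positivity : (0 : ℝ) ≤ H ^ 2 / 2)]
        nlinarith [mul_le_mul_of_nonneg_left hsq (sq_nonneg H)]

lemma lt_of_sq_le_rpow_half {H q : ℝ} (hH : 1 ≤ H) (hq : 1 < q) (h : H ^ 2 ≤ q ^ ((1 : ℝ) / 2)) :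
    H < q :=
  calc H ≤ H ^ 2 := le_self_pow₀ hH two_ne_zero
    _ ≤ q ^ ((1 : ℝ) / 2) := h
    _ < q := Real.rpow_lt_self_of_one_lt hq (by norm_num)

namespace ZMod

lemma sum_range_natCast {q : ℕ} [NeZero q] {M : Type*} [AddCommMonoid M] (f : ZMod q → M) :
    ∑ x ∈ range q, f x = ∑ y, f y :=
  sum_nbij' (↑) val (fun _ _ => mem_univ _) (fun y _ => mem_range.mpr y.val_lt)
    (fun _ ha => val_cast_of_lt (mem_range.mp ha)) (fun y _ => natCast_zmod_val y) (fun _ _ => rfl)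

lemma injOn_natCast_Ioc {q H : ℕ} (hH : H < q) : Set.InjOn (Nat.cast : ℕ → ZMod q) (Ioc 0 H) := by
  intro a ha b hb hab
  rw [← val_cast_of_lt ((mem_Ioc.mp ha).2.trans_lt hH), hab,
    val_cast_of_lt ((mem_Ioc.mp hb).2.trans_lt hH)]

lemma card_image_natCast_Ioc {q H : ℕ} (hH : H < q) :
    #((Ioc 0 H).image (Nat.cast : ℕ → ZMod q)) = H := by
  rw [card_image_of_injOn (injOn_natCast_Ioc hH), Nat.card_Ioc, Nat.sub_zero]

end ZMod

lemma shortCharSum_eq_sum_image {q H : ℕ} (hH : H < q) (χ : DirichletCharacter ℂ q) (x : ℕ) :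
    shortCharSum χ H x = ∑ s ∈ (Ioc 0 H).image (Nat.cast : ℕ → ZMod q), χ (x + s) := by
  have hIoc : Ioc x (x + H) = (Ioc 0 H).image (x + ·) := by simp
  rw [shortCharSum, hIoc, sum_image (add_right_injective x).injOn,
    sum_image (ZMod.injOn_natCast_Ioc hH)]
  push_cast
  rfl

/-- The variance computation justifying the normalization `√(H/2)`:
`(1/q) ∑_x (Re S_{χ,H}(x))² = H/2 + O(H² q^{-1/2})`, and similarly for `Im`. -/
theorem variance_of_short_character_sum :
    ∃ C : ℝ, 0 < C ∧
      ∀ (q : ℕ), Nat.Prime q →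
      ∀ (χ : DirichletCharacter ℂ q), (∃ n : ZMod q, (χ n).im ≠ 0) →
      ∀ (H : ℕ), 1 ≤ H → (H : ℝ) ^ 2 ≤ (q : ℝ) ^ ((1 : ℝ) / 2) →
      |(∑ x ∈ Finset.range q, (shortCharSum χ H x).re ^ 2) / q - (H : ℝ) / 2|
          ≤ C * (H : ℝ) ^ 2 * (q : ℝ) ^ (-(1 : ℝ) / 2) ∧
      |(∑ x ∈ Finset.range q, (shortCharSum χ H x).im ^ 2) / q - (H : ℝ) / 2|
          ≤ C * (H : ℝ) ^ 2 * (q : ℝ) ^ (-(1 : ℝ) / 2) := by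
  refine ⟨1, one_pos, fun q hq χ hχ H hH hHq => ?_⟩
  have : Fact q.Prime := ⟨hq⟩
  have hχ₂ : χ ^ 2 ≠ 1 := MulChar.sq_ne_one_of_apply_im_ne_zero hχ
  have hq₁ : (1 : ℝ) < q := by exact_mod_cast hq.one_lt
  have hHq : H < q := by exact_mod_cast lt_of_sq_le_rpow_half (by exact_mod_cast hH) hq₁ hHq
  simp only [shortCharSum_eq_sum_image hHq, one_mul]
  set S := (Ioc 0 H).image (Nat.cast : ℕ → ZMod q)
  have hA := MulChar.sum_normSq_sum_apply_add (χ := χ) (by rintro rfl; exact hχ₂ (one_pow 2)) S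
  have hB := MulChar.norm_sum_sq_sum_apply_add_le hχ₂ S
  rw [ZMod.card_image_natCast_Ioc hHq, ZMod.card] at hA hB
  replace hB : ‖∑ y, (∑ s ∈ S, χ (y + s)) ^ 2‖ / 2 ≤ (H : ℝ) ^ 2 * √q / 2 := by gcongr
  rw [ZMod.sum_range_natCast fun y => (∑ s ∈ S, χ (y + s)).re ^ 2,
    ZMod.sum_range_natCast fun y => (∑ s ∈ S, χ (y + s)).im ^ 2]
  constructor
  · refine abs_div_sub_half_le_of_abs_sub_le hq₁.le ?_
    rw [← hA]
    exact (abs_sum_re_sq_sub_le _ _).trans hB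
  · refine abs_div_sub_half_le_of_abs_sub_le hq₁.le ?_
    rw [← hA]
    exact (abs_sum_im_sq_sub_le _ _).trans hB
end

section
/- Let X be a standard Gaussian random variable (mean 0, variance 1). There is an absolute constant C > 0 such that for every real t ≥ 1 and every real number l, E[ sin²(πt(X−l)) / (πt(X−l))² ] = (2/t²) ∫_0^t (t−v) cos(2πlv) e^{−(2πv)²/2} dv ≤ C/t, where sin(πy)/(πy) is interpreted as 1 at y = 0. -/
/-!
Since `sincPi (t y) ^ 2 = (2 / t ^ 2) ∫₀ᵗ (t - v) cos (2π v y) dv`, Fubini turns the Gaussian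
average into `(2 / t ^ 2) ∫₀ᵗ (t - v) E[cos (2π v (X - l))] dv`, and the inner expectation is the
real part of the shifted characteristic function, `cos (2π l v) e^{-(2π v)² / 2}`. Bounding
`(t - v) cos (2π l v)` by `t` leaves `(2 / t)` times the Gaussian integral `∫ e^{-2π² v²} dv`.
-/

open MeasureTheory ProbabilityTheory

noncomputable def sincPi (y : ℝ) : ℝ :=
  if y = 0 then 1 else Real.sin (Real.pi * y) / (Real.pi * y)

open Real intervalIntegral

lemma integral_sub_mul_cos (t : ℝ) {a : ℝ} (ha : a ≠ 0) :
    ∫ v in (0 : ℝ)..t, (t - v) * cos (a * v) = (1 - cos (a * t)) / a ^ 2 := by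
  have hderiv (v : ℝ) : HasDerivAt (fun v => (t - v) * sin (a * v) / a - cos (a * v) / a ^ 2)
      ((t - v) * cos (a * v)) v := by
    have hav : HasDerivAt (fun v => a * v) a v := by simpa using (hasDerivAt_id v).const_mul a
    refine ((((hasDerivAt_id v).const_sub t).mul hav.sin).div_const a |>.sub
      (hav.cos.div_const (a ^ 2))).congr_deriv ?_
    simp only [id]
    field_simp
    ring
  rw [integral_eq_sub_of_hasDerivAt (fun v _ => hderiv v)
    (Continuous.intervalIntegrable (by fun_prop) _ _)]
  simp only [sub_self, zero_mul, zero_div, mul_zero, sin_zero, cos_zero]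
  ring

lemma sincPi_mul_sq_eq_integral (t y : ℝ) (ht : t ≠ 0) :
    sincPi (t * y) ^ 2 = 2 / t ^ 2 * ∫ v in (0 : ℝ)..t, (t - v) * cos (2 * π * v * y) := by
  rcases eq_or_ne y 0 with rfl | hy
  · simp only [sincPi, mul_zero, if_true, cos_zero, one_pow, mul_one,
      integral_sub intervalIntegrable_const intervalIntegral.intervalIntegrable_id,
      intervalIntegral.integral_const, integral_id, smul_eq_mul]
    field_simp
    ring
  · simp_rw [show ∀ v, 2 * π * v * y = 2 * π * y * v by intro v; ring]
    rw [sincPi, if_neg (mul_ne_zero ht hy), integral_sub_mul_cos t (by positivity),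
      show 2 * π * y * t = 2 * (π * (t * y)) by ring, cos_two_mul_eq_one_sub]
    field_simp
    ring

lemma integral_sincPi_sq_mul_sub (μ : Measure ℝ) [IsFiniteMeasure μ] {t : ℝ} (ht : t ≠ 0)
    (l : ℝ) :
    ∫ x, sincPi (t * (x - l)) ^ 2 ∂μ =
      2 / t ^ 2 * ∫ v in (0 : ℝ)..t, (t - v) * ∫ x, cos (2 * π * v * (x - l)) ∂μ := by
  have hint : Integrable (Function.uncurry fun v x => (t - v) * cos (2 * π * v * (x - l)))
      ((volume.restrict (Set.uIoc 0 t)).prod μ) := by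
    refine Integrable.mono' (g := fun z => |t - z.1|)
      ((continuous_const.sub continuous_id).abs.integrableOn_uIoc.comp_fst μ) (by fun_prop)
      (ae_of_all _ fun z => ?_)
    rw [Function.uncurry_apply_pair]
    simpa [norm_mul] using mul_le_of_le_one_right (abs_nonneg _) (abs_cos_le_one _)
  simp_rw [sincPi_mul_sq_eq_integral t _ ht, ← MeasureTheory.integral_const_mul,
    intervalIntegral_integral_swap hint, MeasureTheory.integral_const_mul]

lemma integral_cos_mul_sub_eq_re_charFun (μ : Measure ℝ) [IsFiniteMeasure μ] (c l : ℝ) :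
    ∫ x, cos (c * (x - l)) ∂μ = (Complex.exp (-(c * l) * Complex.I) * charFun μ c).re := by
  have hexp (x : ℝ) : Complex.exp (-(c * l) * Complex.I) * Complex.exp (c * x * Complex.I) =
      Complex.exp ((c * (x - l) : ℝ) * Complex.I) := by
    rw [← Complex.exp_add]
    push_cast
    ring_nf
  rw [charFun_apply_real, ← MeasureTheory.integral_const_mul]
  simp_rw [hexp]
  rw [← RCLike.re_to_complex, ← integral_re]
  · simp only [RCLike.re_to_complex, Complex.exp_ofReal_mul_I_re]
  · exact Integrable.of_bound (by fun_prop) 1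
      (ae_of_all _ fun x => by rw [Complex.norm_exp_ofReal_mul_I])

lemma integral_cos_mul_sub_gaussianReal (m : ℝ) (w : NNReal) (c l : ℝ) :
    ∫ x, cos (c * (x - l)) ∂gaussianReal m w = cos (c * (m - l)) * exp (-(w * c ^ 2 / 2)) := by
  rw [integral_cos_mul_sub_eq_re_charFun, charFun_gaussianReal, ← Complex.exp_add,
    show -(c * l : ℂ) * Complex.I + (c * m * Complex.I - w * c ^ 2 / 2) =
      ((-(w * c ^ 2 / 2) : ℝ) : ℂ) + ((c * (m - l) : ℝ) : ℂ) * Complex.I by push_cast; ring,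
    Complex.exp_re]
  simp only [Complex.add_re, Complex.add_im, Complex.ofReal_re, Complex.ofReal_im,
    Complex.re_ofReal_mul, Complex.im_ofReal_mul, Complex.I_re, Complex.I_im]
  ring_nf

lemma integral_sub_mul_cos_mul_exp_neg_mul_sq_le {t : ℝ} (ht : 0 ≤ t) (a : ℝ) {b : ℝ}
    (hb : 0 < b) :
    ∫ v in (0 : ℝ)..t, (t - v) * cos (a * v) * exp (-b * v ^ 2) ≤ t * √(π / b) := by
  have hexp_int : Integrable fun v : ℝ => exp (-b * v ^ 2) := integrable_exp_neg_mul_sq hb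
  calc ∫ v in (0 : ℝ)..t, (t - v) * cos (a * v) * exp (-b * v ^ 2)
      ≤ ∫ v in (0 : ℝ)..t, t * exp (-b * v ^ 2) := by
        refine integral_mono_on ht (Continuous.intervalIntegrable (by fun_prop) _ _)
          (Continuous.intervalIntegrable (by fun_prop) _ _) fun v hv => ?_
        gcongr
        nlinarith [hv.1, hv.2, cos_le_one (a * v), neg_one_le_cos (a * v)]
    _ = t * ∫ v in Set.Ioc 0 t, exp (-b * v ^ 2) := by
        rw [intervalIntegral.integral_const_mul, integral_of_le ht]
    _ ≤ t * ∫ v, exp (-b * v ^ 2) :=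
        mul_le_mul_of_nonneg_left
          (setIntegral_le_integral hexp_int (ae_of_all _ fun v => (exp_pos _).le)) ht
    _ = t * √(π / b) := by rw [integral_gaussian]

/-- The key estimate in the proof of Lemma 4.2: for a standard Gaussian `X`,
`E[sin²(πt(X-l))/(πt(X-l))²] = (2/t²) ∫_0^t (t-v) cos(2πlv) e^{-(2πv)²/2} dv ≤ C/t`. -/
theorem gaussian_fejer_average :
    ∃ C : ℝ, 0 < C ∧
      ∀ (t : ℝ), 1 ≤ t → ∀ (l : ℝ),
        (∫ x, (sincPi (t * (x - l))) ^ 2 ∂(gaussianReal 0 1) =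
            (2 / t ^ 2) * ∫ v in (0 : ℝ)..t,
              (t - v) * Real.cos (2 * Real.pi * l * v) *
                Real.exp (-(2 * Real.pi * v) ^ 2 / 2)) ∧
        (2 / t ^ 2) * (∫ v in (0 : ℝ)..t,
            (t - v) * Real.cos (2 * Real.pi * l * v) *
              Real.exp (-(2 * Real.pi * v) ^ 2 / 2)) ≤ C / t := by
  refine ⟨2 * √(π / (2 * π ^ 2)), by positivity, fun t ht l => ⟨?_, ?_⟩⟩
  · rw [integral_sincPi_sq_mul_sub _ (by positivity) l]
    congr 1
    refine integral_congr fun v _ => ?_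
    rw [integral_cos_mul_sub_gaussianReal, NNReal.coe_one, zero_sub, mul_neg, cos_neg]
    ring_nf
  · have hexp (v : ℝ) : exp (-(2 * π * v) ^ 2 / 2) = exp (-(2 * π ^ 2) * v ^ 2) := by ring_nf
    simp_rw [hexp]
    calc _ ≤ 2 / t ^ 2 * (t * √(π / (2 * π ^ 2))) := by
          gcongr
          exact integral_sub_mul_cos_mul_exp_neg_mul_sq_le (by positivity) _ (by positivity)
      _ = _ := by field_simp
end
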